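/- arXiv:1812.11367 — 2 statements merged into one kernel-verified Lean document; each statement's English description precedes it below -/
import Mathlib

section
/- Let f : [0,T) × [0,1] → ℝⁿ be a smooth solution of ∂ₜf = V + φτ, where V is the normal velocity and φ a smooth scalar function. Then the curvature vector satisfies ∇ₜκ = ∇ₛ²V + ⟨κ, V⟩ κ + φ ∇ₛκ on (0,T) × [0,1]. -/
/-!
For any smooth family of regular curves, commuting `∂ₜ` with `∂ₓ` and differentiating the speed
`|∂ₓf|` in time give `∂ₜτ = ∇ₛ(∂ₜf)` and `∂ₜκ = ∂ₛ(∂ₜτ) - ⟨∂ₛ(∂ₜf), τ⟩ κ`. Along the flow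
`∂ₜf = V + φτ` we have `∇ₛ(∂ₜf) = ∇ₛV + φκ` because `κ ⊥ τ`, and differentiating `⟨V, τ⟩ = 0`
gives `⟨∂ₛV, τ⟩ = -⟨V, κ⟩`, so `⟨∂ₛ(∂ₜf), τ⟩ = ∂ₛφ - ⟨V, κ⟩`. The two `∂ₛφ κ` terms cancel, and
projecting onto the normal space yields the formula.

The flow equation and `⟨V, τ⟩ = 0` only hold on `[0, 1]`, so at the endpoints the spatial
derivatives are compared through derivatives within `[0, 1]`, which is a set of unique
differentiability.
-/

open Set MeasureTheory
open scoped RealInnerProductSpace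

noncomputable section

/-- Arc-length derivative `∂ₛ g = |∂ₓ f|⁻¹ ∂ₓ g` along the curve `f`. -/
def sDeriv {n : ℕ} {F : Type*} [NormedAddCommGroup F] [NormedSpace ℝ F]
    (f : ℝ → EuclideanSpace ℝ (Fin n)) (g : ℝ → F) (x : ℝ) : F :=
  ‖deriv f x‖⁻¹ • deriv g x

/-- The unit tangent `τ = ∂ₛ f`. -/
def tau {n : ℕ} (f : ℝ → EuclideanSpace ℝ (Fin n)) : ℝ → EuclideanSpace ℝ (Fin n) :=
  sDeriv f f

/-- The curvature vector `κ = ∂ₛ² f`. -/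
def kappa {n : ℕ} (f : ℝ → EuclideanSpace ℝ (Fin n)) : ℝ → EuclideanSpace ℝ (Fin n) :=
  sDeriv f (tau f)

/-- Normal projection of the arc-length derivative: `∇ₛψ = ∂ₛψ − ⟨∂ₛψ, τ⟩ τ`. -/
def nablaS {n : ℕ} (f ψ : ℝ → EuclideanSpace ℝ (Fin n)) (x : ℝ) :
    EuclideanSpace ℝ (Fin n) :=
  sDeriv f ψ x - ⟪sDeriv f ψ x, tau f x⟫ • tau f x

/-- Partial time derivative of a time-dependent field. -/
def pT {F : Type*} [NormedAddCommGroup F] [NormedSpace ℝ F]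
    (g : ℝ → ℝ → F) (t x : ℝ) : F :=
  deriv (fun s => g s x) t

/-- Normal projection of the time derivative: `∇ₜψ = ∂ₜψ − ⟨∂ₜψ, τ⟩ τ`. -/
def nablaT {n : ℕ} (f ψ : ℝ → ℝ → EuclideanSpace ℝ (Fin n)) (t x : ℝ) :
    EuclideanSpace ℝ (Fin n) :=
  pT ψ t x - ⟪pT ψ t x, tau (f t) x⟫ • tau (f t) x

open Function Filter Topology
open scoped ContDiff

section PartialDerivatives

variable {F : Type*} [NormedAddCommGroup F] [NormedSpace ℝ F]

theorem ContDiffAt.deriv' {g : ℝ → F} {x : ℝ} {m n : WithTop ℕ∞} (hg : ContDiffAt ℝ n g x)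
    (hmn : m + 1 ≤ n) : ContDiffAt ℝ m (deriv g) x := by
  have : deriv g = fun y => fderiv ℝ g y 1 := funext fun _ => fderiv_apply_one_eq_deriv.symm
  rw [this]
  exact (hg.fderiv_right hmn).clm_apply contDiffAt_const

theorem deriv_eq_of_eqOn {g h : ℝ → F} {s : Set ℝ} {x : ℝ} (hs : UniqueDiffWithinAt ℝ s x)
    (hx : x ∈ s) (hg : DifferentiableAt ℝ g x) (hh : DifferentiableAt ℝ h x) (hgh : EqOn g h s) :
    deriv g x = deriv h x := by
  rw [← hg.derivWithin hs, ← hh.derivWithin hs, derivWithin_congr hgh (hgh hx)]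

variable {g : ℝ → ℝ → F} {p : ℝ × ℝ} {m n : WithTop ℕ∞}

theorem ContDiff.uncurry_apply (hg : ContDiff ℝ n (uncurry g)) (t : ℝ) :
    ContDiff ℝ n (g t) :=
  hg.comp (contDiff_const.prodMk contDiff_id)

theorem ContDiffAt.eventually_hasDerivAt_snd (hg : ContDiffAt ℝ n (uncurry g) p)
    (hn : 1 ≤ n) :
    ∀ᶠ q in 𝓝 p, HasDerivAt (g q.1) (fderiv ℝ (uncurry g) q (0, 1)) q.2 := by
  filter_upwards [(hg.of_le hn).eventually (by simp)] with q hq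
  have hline : HasDerivAt (fun y : ℝ => (q.1, y)) ((0 : ℝ), (1 : ℝ)) q.2 :=
    (hasDerivAt_const _ _).prodMk (hasDerivAt_id _)
  exact (hq.differentiableAt one_ne_zero).hasFDerivAt.comp_hasDerivAt q.2 hline

theorem ContDiffAt.eventually_hasDerivAt_fst (hg : ContDiffAt ℝ n (uncurry g) p)
    (hn : 1 ≤ n) :
    ∀ᶠ q in 𝓝 p, HasDerivAt (fun s => g s q.2) (fderiv ℝ (uncurry g) q (1, 0)) q.1 := by
  filter_upwards [(hg.of_le hn).eventually (by simp)] with q hq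
  have hline : HasDerivAt (fun s : ℝ => (s, q.2)) ((1 : ℝ), (0 : ℝ)) q.1 :=
    (hasDerivAt_id _).prodMk (hasDerivAt_const _ _)
  exact (hq.differentiableAt one_ne_zero).hasFDerivAt.comp_hasDerivAt q.1 hline

theorem ContDiffAt.uncurry_deriv_snd (hg : ContDiffAt ℝ n (uncurry g) p)
    (hmn : m + 1 ≤ n) : ContDiffAt ℝ m (uncurry fun s y => deriv (g s) y) p := by
  refine ((hg.fderiv_right hmn).clm_apply (contDiffAt_const (c := ((0 : ℝ), (1 : ℝ))))
    ).congr_of_eventuallyEq ?_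
  filter_upwards [hg.eventually_hasDerivAt_snd (le_add_self.trans hmn)] with q hq
  exact hq.deriv

theorem ContDiffAt.uncurry_deriv_fst (hg : ContDiffAt ℝ n (uncurry g) p)
    (hmn : m + 1 ≤ n) : ContDiffAt ℝ m (uncurry fun s y => deriv (fun s => g s y) s) p := by
  refine ((hg.fderiv_right hmn).clm_apply (contDiffAt_const (c := ((1 : ℝ), (0 : ℝ))))
    ).congr_of_eventuallyEq ?_
  filter_upwards [hg.eventually_hasDerivAt_fst (le_add_self.trans hmn)] with q hq
  exact hq.deriv

theorem ContDiffAt.fderiv_uncurry_deriv_snd (hg : ContDiffAt ℝ n (uncurry g) p)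
    (hn : 2 ≤ n) (v : ℝ × ℝ) :
    fderiv ℝ (uncurry fun s y => deriv (g s) y) p v
      = fderiv ℝ (fderiv ℝ (uncurry g)) p v (0, 1) := by
  have hΦ : DifferentiableAt ℝ (fderiv ℝ (uncurry g)) p :=
    (hg.fderiv_right (m := 1) (by simpa [one_add_one_eq_two] using hn)).differentiableAt
      one_ne_zero
  have hev : (uncurry fun s y => deriv (g s) y) =ᶠ[𝓝 p] fun q => fderiv ℝ (uncurry g) q (0, 1) := by
    filter_upwards [hg.eventually_hasDerivAt_snd (one_le_two.trans hn)] with q hq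
    exact hq.deriv
  rw [hev.fderiv_eq, fderiv_clm_apply hΦ (differentiableAt_const _)]
  simp

theorem ContDiffAt.fderiv_uncurry_deriv_fst (hg : ContDiffAt ℝ n (uncurry g) p)
    (hn : 2 ≤ n) (v : ℝ × ℝ) :
    fderiv ℝ (uncurry fun s y => deriv (fun s => g s y) s) p v
      = fderiv ℝ (fderiv ℝ (uncurry g)) p v (1, 0) := by
  have hΦ : DifferentiableAt ℝ (fderiv ℝ (uncurry g)) p :=
    (hg.fderiv_right (m := 1) (by simpa [one_add_one_eq_two] using hn)).differentiableAt
      one_ne_zero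
  have hev : (uncurry fun s y => deriv (fun s => g s y) s) =ᶠ[𝓝 p]
      fun q => fderiv ℝ (uncurry g) q (1, 0) := by
    filter_upwards [hg.eventually_hasDerivAt_fst (one_le_two.trans hn)] with q hq
    exact hq.deriv
  rw [hev.fderiv_eq, fderiv_clm_apply hΦ (differentiableAt_const _)]
  simp

theorem ContDiffAt.deriv_deriv_comm (hg : ContDiffAt ℝ n (uncurry g) p)
    (hn : 2 ≤ n) :
    deriv (fun s => deriv (g s) p.2) p.1 = deriv (fun y => deriv (fun s => g s y) p.1) p.2 := by
  have h12 : 1 + 1 ≤ n := by simpa [one_add_one_eq_two] using hn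
  rw [((hg.uncurry_deriv_snd h12).eventually_hasDerivAt_fst le_rfl).self_of_nhds.deriv,
    ((hg.uncurry_deriv_fst h12).eventually_hasDerivAt_snd le_rfl).self_of_nhds.deriv,
    hg.fderiv_uncurry_deriv_snd hn, hg.fderiv_uncurry_deriv_fst hn,
    hg.isSymmSndFDerivAt (by simpa using hn)]

theorem ContDiffAt.hasDerivAt_deriv_snd (hg : ContDiffAt ℝ n (uncurry g) p)
    (hn : 2 ≤ n) :
    HasDerivAt (fun s => deriv (g s) p.2)
      (deriv (fun y => deriv (fun s => g s y) p.1) p.2) p.1 := by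
  rw [← hg.deriv_deriv_comm hn]
  have h12 : 1 + 1 ≤ n := by simpa [one_add_one_eq_two] using hn
  exact ((hg.uncurry_deriv_snd h12).eventually_hasDerivAt_fst le_rfl).self_of_nhds
    |>.differentiableAt.hasDerivAt

end PartialDerivatives

theorem HasDerivAt.norm {E : Type*} [NormedAddCommGroup E] [InnerProductSpace ℝ E] {u : ℝ → E}
    {u' : E} {x : ℝ} (hu : HasDerivAt u u' x) (h0 : u x ≠ 0) :
    HasDerivAt (fun y => ‖u y‖) (⟪u x, u'⟫ / ‖u x‖) x := by
  have h := hu.norm_sq.sqrt (by positivity)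
  simp only [Real.sqrt_sq (norm_nonneg _)] at h
  convert h using 1
  field_simp

section Curve

variable {n : ℕ} {c : ℝ → EuclideanSpace ℝ (Fin n)} {x : ℝ}
  {F : Type*} [NormedAddCommGroup F] [NormedSpace ℝ F]

theorem norm_deriv_smul_sDeriv (h0 : deriv c x ≠ 0) (g : ℝ → F) :
    ‖deriv c x‖ • sDeriv c g x = deriv g x :=
  smul_inv_smul₀ (norm_ne_zero_iff.2 h0) _

theorem deriv_tau (h0 : deriv c x ≠ 0) : deriv (tau c) x = ‖deriv c x‖ • kappa c x :=
  (norm_deriv_smul_sDeriv h0 _).symm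

theorem inner_tau_self (h0 : deriv c x ≠ 0) : ⟪tau c x, tau c x⟫ = 1 := by
  rw [tau, sDeriv, real_inner_smul_left, real_inner_smul_right, real_inner_self_eq_norm_mul_norm]
  field_simp [norm_ne_zero_iff.2 h0]

theorem ContDiffAt.sDeriv {g : ℝ → F} (hc : ContDiffAt ℝ ∞ c x) (hg : ContDiffAt ℝ ∞ g x)
    (h0 : deriv c x ≠ 0) : ContDiffAt ℝ ∞ (sDeriv c g) x :=
  (((hc.deriv' (by simp)).norm ℝ h0).inv (norm_ne_zero_iff.2 h0)).smul (hg.deriv' (by simp))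

theorem ContDiffAt.tau (hc : ContDiffAt ℝ ∞ c x) (h0 : deriv c x ≠ 0) :
    ContDiffAt ℝ ∞ (tau c) x :=
  hc.sDeriv hc h0

theorem ContDiffAt.kappa (hc : ContDiffAt ℝ ∞ c x) (h0 : deriv c x ≠ 0) :
    ContDiffAt ℝ ∞ (kappa c) x :=
  hc.sDeriv (hc.tau h0) h0

theorem ContDiffAt.nablaS {ψ : ℝ → EuclideanSpace ℝ (Fin n)} (hc : ContDiffAt ℝ ∞ c x)
    (hψ : ContDiffAt ℝ ∞ ψ x) (h0 : deriv c x ≠ 0) : ContDiffAt ℝ ∞ (nablaS c ψ) x :=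
  (hc.sDeriv hψ h0).sub (((hc.sDeriv hψ h0).inner ℝ (hc.tau h0)).smul (hc.tau h0))

theorem sDeriv_add {g h : ℝ → F} (hg : DifferentiableAt ℝ g x) (hh : DifferentiableAt ℝ h x) :
    sDeriv c (fun y => g y + h y) x = sDeriv c g x + sDeriv c h x := by
  rw [sDeriv, sDeriv, sDeriv, deriv_fun_add hg hh, smul_add]

theorem sDeriv_smul {a : ℝ → ℝ} {g : ℝ → F} (ha : DifferentiableAt ℝ a x)
    (hg : DifferentiableAt ℝ g x) :
    sDeriv c (fun y => a y • g y) x = a x • sDeriv c g x + sDeriv c a x • g x := by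
  rw [sDeriv, sDeriv, sDeriv, deriv_fun_smul ha hg]
  module

theorem sDeriv_eq_of_eqOn {g h : ℝ → F} {s : Set ℝ} (hs : UniqueDiffWithinAt ℝ s x) (hx : x ∈ s)
    (hg : DifferentiableAt ℝ g x) (hh : DifferentiableAt ℝ h x) (hgh : EqOn g h s) :
    sDeriv c g x = sDeriv c h x := by
  rw [sDeriv, sDeriv, deriv_eq_of_eqOn hs hx hg hh hgh]

theorem sDeriv_inner_add_inner_sDeriv_eq_zero {ψ χ : ℝ → EuclideanSpace ℝ (Fin n)} {s : Set ℝ}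
    {a : ℝ} (hs : UniqueDiffWithinAt ℝ s x) (hx : x ∈ s) (hψ : DifferentiableAt ℝ ψ x)
    (hχ : DifferentiableAt ℝ χ x) (hconst : ∀ y ∈ s, ⟪ψ y, χ y⟫ = a) :
    ⟪sDeriv c ψ x, χ x⟫ + ⟪ψ x, sDeriv c χ x⟫ = 0 := by
  have hderiv : deriv (fun y => ⟪ψ y, χ y⟫) x = 0 := by
    rw [deriv_eq_of_eqOn hs hx (hψ.inner ℝ hχ) (differentiableAt_const a) hconst, deriv_const]
  rw [(hψ.hasDerivAt.inner ℝ hχ.hasDerivAt).deriv] at hderiv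
  rw [sDeriv, sDeriv, real_inner_smul_left, real_inner_smul_right, ← mul_add, add_comm, hderiv,
    mul_zero]

theorem inner_kappa_tau (hc : ContDiffAt ℝ ∞ c x) (h0 : deriv c x ≠ 0) :
    ⟪kappa c x, tau c x⟫ = 0 := by
  have hreg : {y | deriv c y ≠ 0} ∈ 𝓝 x :=
    (hc.deriv' (m := 0) (by simp)).continuousAt.eventually_ne h0
  have hτ : DifferentiableAt ℝ (tau c) x := (hc.tau h0).differentiableAt (by simp)
  have h := sDeriv_inner_add_inner_sDeriv_eq_zero (c := c) (uniqueDiffWithinAt_of_mem_nhds hreg)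
    (mem_of_mem_nhds hreg) hτ hτ fun y hy => inner_tau_self hy
  change ⟪kappa c x, tau c x⟫ + ⟪tau c x, kappa c x⟫ = 0 at h
  rw [real_inner_comm (kappa c x)] at h
  linarith

variable {V P : ℝ → EuclideanSpace ℝ (Fin n)} {φ : ℝ → ℝ} {s : Set ℝ}

theorem sDeriv_eq_of_eqOn_add_smul_tau (hs : UniqueDiffOn ℝ s) (hx : x ∈ s)
    (hc : ContDiff ℝ ∞ c) (hV : ContDiff ℝ ∞ V) (hφ : ContDiff ℝ ∞ φ) (hP : ContDiff ℝ ∞ P)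
    (h0 : deriv c x ≠ 0) (hPW : EqOn P (fun y => V y + φ y • tau c y) s) :
    sDeriv c P x = sDeriv c V x + (φ x • kappa c x + sDeriv c φ x • tau c x) := by
  have hτ : DifferentiableAt ℝ (tau c) x := (hc.contDiffAt.tau h0).differentiableAt (by simp)
  have hφτ : DifferentiableAt ℝ (fun y => φ y • tau c y) x :=
    (hφ.differentiable (by simp) x).smul hτ
  rw [sDeriv_eq_of_eqOn (hs x hx) hx (hP.differentiable (by simp) x)
      ((hV.differentiable (by simp) x).fun_add hφτ) hPW,
    sDeriv_add (hV.differentiable (by simp) x) hφτ, sDeriv_smul (hφ.differentiable (by simp) x) hτ]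
  rfl

theorem nablaS_eqOn_of_eqOn_add_smul_tau (hs : UniqueDiffOn ℝ s)
    (hc : ContDiff ℝ ∞ c) (hV : ContDiff ℝ ∞ V) (hφ : ContDiff ℝ ∞ φ) (hP : ContDiff ℝ ∞ P)
    (hreg : ∀ y ∈ s, deriv c y ≠ 0) (hPW : EqOn P (fun y => V y + φ y • tau c y) s) :
    EqOn (nablaS c P) (fun y => nablaS c V y + φ y • kappa c y) s := by
  intro y hy
  dsimp only
  rw [nablaS, nablaS, sDeriv_eq_of_eqOn_add_smul_tau hs hy hc hV hφ hP (hreg y hy) hPW]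
  simp only [inner_add_left, real_inner_smul_left, inner_kappa_tau hc.contDiffAt (hreg y hy),
    inner_tau_self (hreg y hy)]
  module

theorem inner_sDeriv_tau_of_eqOn_add_smul_tau (hs : UniqueDiffOn ℝ s) (hx : x ∈ s)
    (hc : ContDiff ℝ ∞ c) (hV : ContDiff ℝ ∞ V) (hφ : ContDiff ℝ ∞ φ) (hP : ContDiff ℝ ∞ P)
    (hreg : ∀ y ∈ s, deriv c y ≠ 0) (hVτ : ∀ y ∈ s, ⟪V y, tau c y⟫ = 0)
    (hPW : EqOn P (fun y => V y + φ y • tau c y) s) :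
    ⟪sDeriv c P x, tau c x⟫ = sDeriv c φ x - ⟪V x, kappa c x⟫ := by
  have h0 := hreg x hx
  have hVκ : ⟪sDeriv c V x, tau c x⟫ + ⟪V x, kappa c x⟫ = 0 :=
    sDeriv_inner_add_inner_sDeriv_eq_zero (hs x hx) hx (hV.differentiable (by simp) x)
      ((hc.contDiffAt.tau h0).differentiableAt (by simp)) hVτ
  rw [sDeriv_eq_of_eqOn_add_smul_tau hs hx hc hV hφ hP h0 hPW]
  simp only [inner_add_left, real_inner_smul_left, inner_kappa_tau hc.contDiffAt h0,
    inner_tau_self h0]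
  linarith

theorem sDeriv_nablaS_eq_of_eqOn_add_smul_tau (hs : UniqueDiffOn ℝ s) (hx : x ∈ s)
    (hc : ContDiff ℝ ∞ c) (hV : ContDiff ℝ ∞ V) (hφ : ContDiff ℝ ∞ φ) (hP : ContDiff ℝ ∞ P)
    (hreg : ∀ y ∈ s, deriv c y ≠ 0) (hPW : EqOn P (fun y => V y + φ y • tau c y) s) :
    sDeriv c (nablaS c P) x
      = sDeriv c (nablaS c V) x + (φ x • sDeriv c (kappa c) x + sDeriv c φ x • kappa c x) := by
  have h0 := hreg x hx
  have hκ : DifferentiableAt ℝ (kappa c) x := (hc.contDiffAt.kappa h0).differentiableAt (by simp)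
  have hV' : DifferentiableAt ℝ (nablaS c V) x :=
    (hc.contDiffAt.nablaS hV.contDiffAt h0).differentiableAt (by simp)
  have hφκ : DifferentiableAt ℝ (fun y => φ y • kappa c y) x :=
    (hφ.differentiable (by simp) x).smul hκ
  rw [sDeriv_eq_of_eqOn (hs x hx) hx
      ((hc.contDiffAt.nablaS hP.contDiffAt h0).differentiableAt (by simp)) (hV'.fun_add hφκ)
      (nablaS_eqOn_of_eqOn_add_smul_tau hs hc hV hφ hP hreg hPW),
    sDeriv_add hV' hφκ, sDeriv_smul (hφ.differentiable (by simp) x) hκ]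

theorem sDeriv_nablaS_sub_eq_of_eqOn_add_smul_tau (hs : UniqueDiffOn ℝ s) (hx : x ∈ s)
    (hc : ContDiff ℝ ∞ c) (hV : ContDiff ℝ ∞ V) (hφ : ContDiff ℝ ∞ φ) (hP : ContDiff ℝ ∞ P)
    (hreg : ∀ y ∈ s, deriv c y ≠ 0) (hVτ : ∀ y ∈ s, ⟪V y, tau c y⟫ = 0)
    (hPW : EqOn P (fun y => V y + φ y • tau c y) s) :
    sDeriv c (nablaS c P) x - ⟪sDeriv c P x, tau c x⟫ • kappa c x
      = sDeriv c (nablaS c V) x + ⟪kappa c x, V x⟫ • kappa c x + φ x • sDeriv c (kappa c) x := by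
  rw [sDeriv_nablaS_eq_of_eqOn_add_smul_tau hs hx hc hV hφ hP hreg hPW,
    inner_sDeriv_tau_of_eqOn_add_smul_tau hs hx hc hV hφ hP hreg hVτ hPW, real_inner_comm]
  module

end Curve

section TimeDerivatives

variable {n : ℕ} {f : ℝ → ℝ → EuclideanSpace ℝ (Fin n)} {t x : ℝ}

theorem ContDiff.pT (hf : ContDiff ℝ ∞ (uncurry f)) (t : ℝ) : ContDiff ℝ ∞ (pT f t) :=
  ContDiff.uncurry_apply
    (contDiff_iff_contDiffAt.2 fun _ => hf.contDiffAt.uncurry_deriv_fst (by simp)) t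

theorem hasDerivAt_deriv_time (hf : ContDiff ℝ ∞ (uncurry f)) :
    HasDerivAt (fun s => deriv (f s) x) (deriv (pT f t) x) t :=
  hf.contDiffAt.hasDerivAt_deriv_snd (p := (t, x)) (by norm_cast)

theorem hasDerivAt_norm_deriv_time (hf : ContDiff ℝ ∞ (uncurry f)) (h0 : deriv (f t) x ≠ 0) :
    HasDerivAt (fun s => ‖deriv (f s) x‖)
      (⟪deriv (f t) x, deriv (pT f t) x⟫ / ‖deriv (f t) x‖) t :=
  (hasDerivAt_deriv_time hf).norm h0

theorem hasDerivAt_tau_time (hf : ContDiff ℝ ∞ (uncurry f)) (h0 : deriv (f t) x ≠ 0) :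
    HasDerivAt (fun s => tau (f s) x) (nablaS (f t) (pT f t) x) t := by
  have hv : ‖deriv (f t) x‖ ≠ 0 := norm_ne_zero_iff.2 h0
  refine ((hasDerivAt_norm_deriv_time hf h0).inv hv |>.smul (hasDerivAt_deriv_time hf))
    |>.congr_deriv ?_
  simp only [nablaS, sDeriv, tau, Pi.inv_apply, real_inner_smul_right,
    real_inner_comm (deriv (f t) x)]
  match_scalars <;> field_simp

theorem hasDerivAt_kappa_time (hf : ContDiff ℝ ∞ (uncurry f)) (h0 : deriv (f t) x ≠ 0) :
    HasDerivAt (fun s => kappa (f s) x)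
      (sDeriv (f t) (nablaS (f t) (pT f t)) x
        - ⟪sDeriv (f t) (pT f t) x, tau (f t) x⟫ • kappa (f t) x) t := by
  have hv : ‖deriv (f t) x‖ ≠ 0 := norm_ne_zero_iff.2 h0
  have hf' : ContDiffAt ℝ ∞ (uncurry fun s y => deriv (f s) y) (t, x) :=
    hf.contDiffAt.uncurry_deriv_snd (by simp)
  have hτ : ContDiffAt ℝ ∞ (uncurry fun s y => tau (f s) y) (t, x) :=
    ((hf'.norm ℝ h0).inv hv).smul hf'
  have hreg : ∀ᶠ y in 𝓝 x, deriv (f t) y ≠ 0 :=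
    ((hf.uncurry_apply t).contDiffAt.deriv' (m := 0) (by simp)).continuousAt.eventually_ne h0
  have hτ_time : (fun y => deriv (fun s => tau (f s) y) t) =ᶠ[𝓝 x] nablaS (f t) (pT f t) := by
    filter_upwards [hreg] with y hy
    exact (hasDerivAt_tau_time hf hy).deriv
  have hdτ : HasDerivAt (fun s => deriv (tau (f s)) x) (deriv (nablaS (f t) (pT f t)) x) t := by
    rw [← hτ_time.deriv_eq]
    exact hτ.hasDerivAt_deriv_snd (by norm_cast)
  refine ((hasDerivAt_norm_deriv_time hf h0).inv hv |>.smul hdτ) |>.congr_deriv ?_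
  rw [deriv_tau h0]
  simp only [sDeriv, tau, Pi.inv_apply, real_inner_smul_right,
    real_inner_comm (deriv (f t) x)]
  match_scalars <;> field_simp

end TimeDerivatives

theorem curvature_evolution_general {n : ℕ} (T : ℝ)
    (f V : ℝ → ℝ → EuclideanSpace ℝ (Fin n)) (φ : ℝ → ℝ → ℝ)
    (hf : ContDiff ℝ (⊤ : ℕ∞) (Function.uncurry f))
    (hV : ContDiff ℝ (⊤ : ℕ∞) (Function.uncurry V))
    (hφ : ContDiff ℝ (⊤ : ℕ∞) (Function.uncurry φ))
    (hreg : ∀ t ∈ Ico (0 : ℝ) T, ∀ x ∈ Icc (0 : ℝ) 1, deriv (f t) x ≠ 0)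
    (hnormal : ∀ t ∈ Ico (0 : ℝ) T, ∀ x ∈ Icc (0 : ℝ) 1, ⟪V t x, tau (f t) x⟫ = 0)
    (hflow : ∀ t ∈ Ico (0 : ℝ) T, ∀ x ∈ Icc (0 : ℝ) 1,
      pT f t x = V t x + φ t x • tau (f t) x) :
    ∀ t ∈ Ioo (0 : ℝ) T, ∀ x ∈ Icc (0 : ℝ) 1,
      nablaT f (fun s => kappa (f s)) t x
        = nablaS (f t) (nablaS (f t) (V t)) x
          + ⟪kappa (f t) x, V t x⟫ • kappa (f t) x
          + φ t x • nablaS (f t) (kappa (f t)) x := by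
  intro t ht x hx
  have ht' : t ∈ Ico 0 T := Ioo_subset_Ico_self ht
  have h0 := hreg t ht' x hx
  have hκ_time : pT (fun s => kappa (f s)) t x
      = sDeriv (f t) (nablaS (f t) (V t)) x + ⟪kappa (f t) x, V t x⟫ • kappa (f t) x
        + φ t x • sDeriv (f t) (kappa (f t)) x := by
    rw [pT, (hasDerivAt_kappa_time hf h0).deriv]
    exact sDeriv_nablaS_sub_eq_of_eqOn_add_smul_tau (uniqueDiffOn_Icc zero_lt_one) hx
      (hf.uncurry_apply t) (hV.uncurry_apply t) (hφ.uncurry_apply t) (hf.pT t) (hreg t ht')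
      (hnormal t ht') (hflow t ht')
  rw [nablaT, hκ_time, nablaS, nablaS]
  simp only [inner_add_left, real_inner_smul_left,
    inner_kappa_tau (hf.uncurry_apply t).contDiffAt h0]
  module

/-- Evolution of the curvature vector along the flow `∂ₜ f = V + φ τ`:
`∇ₜ κ = ∇ₛ² V + ⟨κ, V⟩ κ + φ ∇ₛ κ`. -/
theorem curvature_evolution {n : ℕ} (hn : 2 ≤ n) (T : ℝ) (hT : 0 < T)
    (f V : ℝ → ℝ → EuclideanSpace ℝ (Fin n)) (φ : ℝ → ℝ → ℝ)
    (hf : ContDiff ℝ (⊤ : ℕ∞) (Function.uncurry f))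
    (hV : ContDiff ℝ (⊤ : ℕ∞) (Function.uncurry V))
    (hφ : ContDiff ℝ (⊤ : ℕ∞) (Function.uncurry φ))
    (hreg : ∀ t ∈ Ico (0 : ℝ) T, ∀ x ∈ Icc (0 : ℝ) 1, deriv (f t) x ≠ 0)
    (hnormal : ∀ t ∈ Ico (0 : ℝ) T, ∀ x ∈ Icc (0 : ℝ) 1, ⟪V t x, tau (f t) x⟫ = 0)
    (hflow : ∀ t ∈ Ico (0 : ℝ) T, ∀ x ∈ Icc (0 : ℝ) 1,
      pT f t x = V t x + φ t x • tau (f t) x) :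
    ∀ t ∈ Ioo (0 : ℝ) T, ∀ x ∈ Icc (0 : ℝ) 1,
      nablaT f (fun s => kappa (f s)) t x
        = nablaS (f t) (nablaS (f t) (V t)) x
          + ⟪kappa (f t) x, V t x⟫ • kappa (f t) x
          + φ t x • nablaS (f t) (kappa (f t)) x :=
  curvature_evolution_general T f V φ hf hV hφ hreg hnormal hflow
end
end

section
/- Let f : [0,1] → ℝⁿ be a regular smooth curve with curvature vector κ. Then for all k ∈ ℕ there is a constant C = C(n,k) such that ‖κ‖_{k,2} ≤ C ( ‖∇ₛᵏκ‖₂ + ‖κ‖₂ ), where the norms are the scale-invariant norms. -/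
open Set MeasureTheory
open scoped RealInnerProductSpace

noncomputable section

/-- Iterated normal arc-length derivative `∇ₛ^m`. -/
def nablaSIter {n : ℕ} (f : ℝ → EuclideanSpace ℝ (Fin n)) :
    ℕ → (ℝ → EuclideanSpace ℝ (Fin n)) → ℝ → EuclideanSpace ℝ (Fin n)
  | 0, ψ => ψ
  | m + 1, ψ => nablaS f (nablaSIter f m ψ)

/-- Length of the curve `f` over `[0,1]`. -/
def curveLen {n : ℕ} (f : ℝ → EuclideanSpace ℝ (Fin n)) : ℝ :=
  ∫ x in (0 : ℝ)..1, ‖deriv f x‖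

/-- Scale-invariant norm `‖∇ₛⁱκ‖_p = L(f)^{i+1-1/p} (∫₀¹ |∇ₛⁱκ|^p ds)^{1/p}`. -/
def knorm {n : ℕ} (f : ℝ → EuclideanSpace ℝ (Fin n)) (i : ℕ) (p : ℝ) : ℝ :=
  curveLen f ^ ((i : ℝ) + 1 - 1 / p) *
    (∫ x in (0 : ℝ)..1, ‖nablaSIter f i (kappa f) x‖ ^ p * ‖deriv f x‖) ^ (1 / p)

/-- Scale-invariant norm `‖κ‖_{k,p} = Σ_{i=0}^{k} ‖∇ₛⁱκ‖_p`. -/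
def knormSum {n : ℕ} (f : ℝ → EuclideanSpace ℝ (Fin n)) (k : ℕ) (p : ℝ) : ℝ :=
  ∑ i ∈ Finset.range (k + 1), knorm f i p


/-!
Write `ψᵢ = ∇ₛⁱκ` and `αᵢ = Lⁱ ‖ψᵢ‖_{L²(ds)}`, so that `‖∇ₛⁱκ‖₂ = √L αᵢ`. Every `ψᵢ` is a smooth
normal field, and for normal fields `∂ₓ⟨φ, ψ⟩ = |∂ₓf| (⟨φ, ∇ₛψ⟩ + ⟨∇ₛφ, ψ⟩)`. Comparing `|ψ|²` with
its minimum on the curve gives `L sup |ψ|² ≤ ‖ψ‖² + 2L ‖ψ‖ ‖∇ₛψ‖`; integrating `|∇ₛψ|²` by parts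
and bounding the boundary terms this way yields the interpolation inequality
`α_{i+1}² ≤ A (αᵢ² + αᵢ α_{i+2})` with a universal constant `A`. A discrete argument, first
descending from `i = k` and then ascending from `i = 0`, bounds every `αᵢ` by `C (α₀ + α_k)`.
-/

open scoped ContDiff

theorem sq_le_of_sq_le_add_add {x y z p q : ℝ} (hx : 0 ≤ x) (hy : 0 ≤ y) (hz : 0 ≤ z)
    (hp : p ^ 2 ≤ (x ^ 2 + 2 * x * y) * (y ^ 2 + 2 * y * z))
    (hq : q ^ 2 ≤ (x ^ 2 + 2 * x * y) * (y ^ 2 + 2 * y * z))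
    (h : y ^ 2 ≤ p + q + x * z) : y ^ 2 ≤ 10000 * (x ^ 2 + x * z) := by
  -- Otherwise `x` and `x z` are small against `y`, and `(y² - x z)² ≤ 4 P` fails.
  by_contra! hlt
  set P := (x ^ 2 + 2 * x * y) * (y ^ 2 + 2 * y * z)
  have hxz : x * z ≤ y ^ 2 / 10000 := by nlinarith [sq_nonneg x]
  have hx2 : x ^ 2 ≤ y ^ 2 / 10000 := by nlinarith [mul_nonneg hx hz]
  have hxy : 100 * x ≤ y := by nlinarith
  have hP : P ≤ y ^ 4 / 40 := by
    have h1 := mul_le_mul_of_nonneg_right hx2 (sq_nonneg y)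
    have h2 := mul_le_mul hxz (mul_le_mul_of_nonneg_right hxy hy) (by positivity) (by positivity)
    have h3 := mul_le_mul_of_nonneg_right hxy (pow_nonneg hy 3)
    have h4 := mul_le_mul_of_nonneg_right hxz (sq_nonneg y)
    nlinarith
  have hsq : (y ^ 2 - x * z) ^ 2 ≤ 4 * P := by
    have hpq : y ^ 2 - x * z ≤ 2 * √P := by
      linarith [(le_abs_self p).trans (Real.abs_le_sqrt hp),
        (le_abs_self q).trans (Real.abs_le_sqrt hq)]
    calc (y ^ 2 - x * z) ^ 2
        ≤ (2 * √P) ^ 2 := pow_le_pow_left₀ (by nlinarith [sq_nonneg x]) hpq 2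
      _ = 4 * P := by
        rw [mul_pow, Real.sq_sqrt (mul_nonneg (by positivity) (by positivity))]
        ring
  have hy2 : 0 < y ^ 2 := by nlinarith [mul_nonneg hx hz]
  nlinarith

theorem le_two_mul_of_sq_le {B m y : ℝ} (hB : 1 ≤ B) (hm : 0 ≤ m)
    (h : y ^ 2 ≤ B * (m ^ 2 + m * y)) : y ≤ 2 * B * m := by
  by_contra! hlt
  have hy0 : 0 < y := lt_of_le_of_lt (by positivity) hlt
  nlinarith [mul_lt_mul_of_pos_right hlt hy0,
    mul_nonneg (mul_nonneg (by linarith : (0 : ℝ) ≤ B) hm) (by nlinarith : (0 : ℝ) ≤ y - m)]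

section Chain

variable {A : ℝ} {k : ℕ} {α : ℕ → ℝ}

theorem succ_le_pow_mul_add_of_sq_le (hA : 1 ≤ A) (hα : ∀ i, 0 ≤ α i)
    (h : ∀ i, i + 2 ≤ k → α (i + 1) ^ 2 ≤ A * (α i ^ 2 + α i * α (i + 2))) :
    ∀ t i, i + 1 + t = k → α (i + 1) ≤ (2 * A) ^ t * (α i + α k) := by
  intro t
  induction t with
  | zero =>
    intro i hi
    rw [← hi]
    linarith [hα i]
  | succ t ih =>
    intro i hi
    set c := (2 * A) ^ t
    have hc : 1 ≤ c := one_le_pow₀ (by linarith)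
    have hnext : α (i + 2) ≤ c * (α (i + 1) + α k) := ih (i + 1) (by omega)
    rw [pow_succ, show c * (2 * A) * (α i + α k) = 2 * (A * c) * (α i + α k) by ring]
    refine le_two_mul_of_sq_le (one_le_mul_of_one_le_of_one_le hA hc)
      (add_nonneg (hα i) (hα k)) ?_
    calc α (i + 1) ^ 2 ≤ A * (α i ^ 2 + α i * α (i + 2)) := h i (by omega)
      _ ≤ A * (α i ^ 2 + α i * (c * (α (i + 1) + α k))) := by
        gcongr
        exact hα i
      _ ≤ A * c * ((α i + α k) ^ 2 + (α i + α k) * α (i + 1)) := by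
        have hAc : 0 ≤ A * c := mul_nonneg (by linarith) (by linarith)
        nlinarith [mul_nonneg (mul_nonneg (by linarith : (0 : ℝ) ≤ A) (sub_nonneg.2 hc))
            (sq_nonneg (α i)),
          mul_nonneg (mul_nonneg hAc (hα k)) (add_nonneg (hα i) (hα (i + 1))),
          mul_nonneg hAc (sq_nonneg (α k))]

theorem le_pow_mul_add_of_sq_le (hA : 1 ≤ A) (hα : ∀ i, 0 ≤ α i)
    (h : ∀ i, i + 2 ≤ k → α (i + 1) ^ 2 ≤ A * (α i ^ 2 + α i * α (i + 2))) :
    ∀ i ≤ k, α i ≤ (2 * (2 * A) ^ k) ^ k * (α 0 + α k) := by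
  set E := (2 * A) ^ k
  have hE : 1 ≤ E := one_le_pow₀ (by linarith)
  have hs : 0 ≤ α 0 + α k := add_nonneg (hα 0) (hα k)
  have hstep : ∀ i, i + 1 ≤ k → α (i + 1) ≤ E * (α i + α k) := fun i hi =>
    (succ_le_pow_mul_add_of_sq_le hA hα h (k - (i + 1)) i (by omega)).trans
      (mul_le_mul_of_nonneg_right (pow_le_pow_right₀ (by linarith) (by omega))
        (add_nonneg (hα i) (hα k)))
  have hpow : ∀ i ≤ k, α i ≤ (2 * E) ^ i * (α 0 + α k) := by
    intro i
    induction i with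
    | zero =>
      intro _
      linarith [hα k]
    | succ i ih =>
      intro hi
      have h1 : 1 ≤ (2 * E) ^ i := one_le_pow₀ (by linarith)
      calc α (i + 1) ≤ E * (α i + α k) := hstep i hi
        _ ≤ E * ((2 * E) ^ i * (α 0 + α k) + (2 * E) ^ i * (α 0 + α k)) := by
          gcongr
          · exact ih (by omega)
          · nlinarith [hα 0]
        _ = (2 * E) ^ (i + 1) * (α 0 + α k) := by ring
  exact fun i hi => (hpow i hi).trans
    (mul_le_mul_of_nonneg_right (pow_le_pow_right₀ (by linarith) hi) hs)

end Chain

section Integral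

variable {a b : ℝ}

theorem integral_mul_mul_le_sqrt_mul_sqrt {g h w : ℝ → ℝ} (hab : a ≤ b)
    (hg : ContinuousOn g (Icc a b)) (hh : ContinuousOn h (Icc a b))
    (hw : ContinuousOn w (Icc a b)) (hw0 : ∀ x ∈ Icc a b, 0 ≤ w x) :
    ∫ x in a..b, g x * h x * w x ≤
      √(∫ x in a..b, g x ^ 2 * w x) * √(∫ x in a..b, h x ^ 2 * w x) := by
  set A := ∫ x in a..b, g x ^ 2 * w x
  set B := ∫ x in a..b, g x * h x * w x
  set C := ∫ x in a..b, h x ^ 2 * w x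
  have hint : ∀ u : ℝ → ℝ, ContinuousOn u (Icc a b) →
      IntervalIntegrable (fun x => u x * w x) volume a b :=
    fun u hu => (hu.mul hw).intervalIntegrable_of_Icc hab
  have hquad : ∀ t : ℝ, 0 ≤ A * (t * t) + (-2 * B) * t + C := fun t => by
    have hexp : ∫ x in a..b, (t * g x - h x) ^ 2 * w x = A * (t * t) + (-2 * B) * t + C := by
      simp_rw [show ∀ x, (t * g x - h x) ^ 2 * w x = t * t * (g x ^ 2 * w x)
        + (-2 * t) * (g x * h x * w x) + h x ^ 2 * w x from fun x => by ring]
      rw [intervalIntegral.integral_add, intervalIntegral.integral_add,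
        intervalIntegral.integral_const_mul, intervalIntegral.integral_const_mul]
      · ring
      · exact (hint _ (hg.pow 2)).const_mul _
      · exact (hint _ (hg.mul hh)).const_mul _
      · exact ((hint _ (hg.pow 2)).const_mul _).add ((hint _ (hg.mul hh)).const_mul _)
      · exact hint _ (hh.pow 2)
    rw [← hexp]
    exact intervalIntegral.integral_nonneg hab fun x hx => mul_nonneg (sq_nonneg _) (hw0 x hx)
  have hA : 0 ≤ A :=
    intervalIntegral.integral_nonneg hab fun x hx => mul_nonneg (sq_nonneg _) (hw0 x hx)
  have hdisc : B ^ 2 ≤ A * C := by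
    have := discrim_le_zero hquad
    rw [discrim] at this
    linarith
  rw [← Real.sqrt_mul hA]
  exact (le_abs_self B).trans (Real.abs_le_sqrt hdisc)

theorem integral_abs_inner_mul_le_sqrt_mul_sqrt {E : Type*} [NormedAddCommGroup E]
    [InnerProductSpace ℝ E] {g h : ℝ → E} {w : ℝ → ℝ} (hab : a ≤ b)
    (hg : ContinuousOn g (Icc a b)) (hh : ContinuousOn h (Icc a b))
    (hw : ContinuousOn w (Icc a b)) (hw0 : ∀ x ∈ Icc a b, 0 ≤ w x) :
    ∫ x in a..b, |⟪g x, h x⟫| * w x ≤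
      √(∫ x in a..b, ‖g x‖ ^ 2 * w x) * √(∫ x in a..b, ‖h x‖ ^ 2 * w x) := by
  refine le_trans ?_ (integral_mul_mul_le_sqrt_mul_sqrt hab hg.norm hh.norm hw hw0)
  refine intervalIntegral.integral_mono_on hab ?_ ?_ fun x hx =>
    mul_le_mul_of_nonneg_right (abs_real_inner_le_norm _ _) (hw0 x hx)
  · exact ((hg.inner hh).abs.mul hw).intervalIntegrable_of_Icc hab
  · exact ((hg.norm.mul hh.norm).mul hw).intervalIntegrable_of_Icc hab

theorem integral_mul_sub_integral_abs_deriv_le {φ φ' w : ℝ → ℝ} {e : ℝ} (hab : a ≤ b)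
    (he : e ∈ Icc a b) (hφ : ∀ x ∈ Icc a b, HasDerivAt φ (φ' x) x)
    (hφ' : ContinuousOn φ' (Icc a b)) (hw : ContinuousOn w (Icc a b))
    (hw0 : ∀ x ∈ Icc a b, 0 ≤ w x) :
    (∫ x in a..b, w x) * (φ e - ∫ x in a..b, |φ' x|) ≤ ∫ x in a..b, φ x * w x := by
  have hφc : ContinuousOn φ (Icc a b) := fun x hx => (hφ x hx).continuousAt.continuousWithinAt
  obtain ⟨y, hy, hmin⟩ := isCompact_Icc.exists_isMinOn ⟨a, left_mem_Icc.2 hab⟩ hφc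
  have hsub : uIcc y e ⊆ Icc a b := uIcc_subset_Icc hy he
  have hftc : ∫ x in y..e, φ' x = φ e - φ y :=
    intervalIntegral.integral_eq_sub_of_hasDerivAt (fun x hx => hφ x (hsub hx))
      (hφ'.mono hsub).intervalIntegrable
  have hvar : ∫ x in y..e, φ' x ≤ ∫ x in a..b, |φ' x| :=
    calc (∫ x in y..e, φ' x)
        ≤ |(∫ x in y..e, |φ' x|)| := by
          simpa only [Real.norm_eq_abs] using
            (le_abs_self _).trans (intervalIntegral.norm_integral_le_abs_integral_norm (f := φ'))
      _ ≤ |(∫ x in a..b, |φ' x|)| := by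
          refine intervalIntegral.abs_integral_mono_interval
            (uIoc_subset_uIoc_of_uIcc_subset_uIcc (by rwa [uIcc_of_le hab]))
            (Filter.Eventually.of_forall fun _ => abs_nonneg _)
            (hφ'.abs.intervalIntegrable_of_Icc hab)
      _ = ∫ x in a..b, |φ' x| :=
          abs_of_nonneg (intervalIntegral.integral_nonneg hab fun _ _ => abs_nonneg _)
  calc (∫ x in a..b, w x) * (φ e - ∫ x in a..b, |φ' x|)
      ≤ (∫ x in a..b, w x) * φ y :=
        mul_le_mul_of_nonneg_left (by linarith) (intervalIntegral.integral_nonneg hab hw0)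
    _ = ∫ x in a..b, φ y * w x := by
        rw [intervalIntegral.integral_const_mul, mul_comm]
    _ ≤ ∫ x in a..b, φ x * w x := by
        refine intervalIntegral.integral_mono_on hab ?_ ?_ fun x hx =>
          mul_le_mul_of_nonneg_right (hmin hx) (hw0 x hx)
        · exact (continuousOn_const.mul hw).intervalIntegrable_of_Icc hab
        · exact (hφc.mul hw).intervalIntegrable_of_Icc hab

end Integral

section Curve

variable {n : ℕ} {f : ℝ → EuclideanSpace ℝ (Fin n)}

theorem isOpen_setOf_deriv_ne_zero (hf : Continuous (deriv f)) : IsOpen {x | deriv f x ≠ 0} :=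
  isOpen_ne_fun hf continuous_const

theorem contDiffOn_sDeriv {F : Type*} [NormedAddCommGroup F] [NormedSpace ℝ F] {g : ℝ → F}
    (hf : ContDiff ℝ ∞ f) (hg : ContDiffOn ℝ ∞ g {x | deriv f x ≠ 0}) :
    ContDiffOn ℝ ∞ (sDeriv f g) {x | deriv f x ≠ 0} := by
  have hU := isOpen_setOf_deriv_ne_zero (hf.continuous_deriv (by simp))
  have hρ : ContDiffOn ℝ ∞ (fun x => ‖deriv f x‖⁻¹) {x | deriv f x ≠ 0} := fun x hx =>
    (((contDiff_infty_iff_deriv.1 hf).2.contDiffAt.norm ℝ hx).inv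
      (norm_ne_zero_iff.2 hx)).contDiffWithinAt
  exact hρ.smul (hg.deriv_of_isOpen hU (by simp))

theorem contDiffOn_tau (hf : ContDiff ℝ ∞ f) : ContDiffOn ℝ ∞ (tau f) {x | deriv f x ≠ 0} :=
  contDiffOn_sDeriv hf hf.contDiffOn

theorem norm_tau {x : ℝ} (hx : deriv f x ≠ 0) : ‖tau f x‖ = 1 := by
  simp [tau, sDeriv, norm_smul, hx]

theorem inner_kappa_tau_s12 (hf : ContDiff ℝ ∞ f) {x : ℝ} (hx : deriv f x ≠ 0) :
    ⟪kappa f x, tau f x⟫ = 0 := by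
  have hU := isOpen_setOf_deriv_ne_zero (hf.continuous_deriv (by simp))
  have hτ : DifferentiableAt ℝ (tau f) x :=
    ((contDiffOn_tau hf).contDiffAt (hU.mem_nhds hx)).differentiableAt (by simp)
  have hconst : (fun y => ⟪tau f y, tau f y⟫) =ᶠ[nhds x] fun _ => 1 :=
    Filter.eventually_of_mem (hU.mem_nhds hx) fun y hy => by
      change ⟪tau f y, tau f y⟫ = 1
      rw [real_inner_self_eq_norm_sq, norm_tau hy, one_pow]
  have hderiv := (hτ.hasDerivAt.inner ℝ hτ.hasDerivAt).congr_of_eventuallyEq hconst.symm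
  rw [real_inner_comm (deriv (tau f) x)] at hderiv
  have h0 : ⟪deriv (tau f) x, tau f x⟫ = 0 := by
    linarith [(hasDerivAt_const x (1 : ℝ)).unique hderiv]
  rw [kappa, sDeriv, real_inner_smul_left, h0, mul_zero]

theorem inner_nablaS_tau {ψ : ℝ → EuclideanSpace ℝ (Fin n)} {x : ℝ} (hx : deriv f x ≠ 0) :
    ⟪nablaS f ψ x, tau f x⟫ = 0 := by
  rw [nablaS, inner_sub_left, real_inner_smul_left, real_inner_self_eq_norm_sq, norm_tau hx]
  ring

structure IsSmoothNormalField (f ψ : ℝ → EuclideanSpace ℝ (Fin n)) : Prop where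
  contDiffOn : ContDiffOn ℝ ∞ ψ {x | deriv f x ≠ 0}
  inner_tau : ∀ x, deriv f x ≠ 0 → ⟪ψ x, tau f x⟫ = 0

theorem isSmoothNormalField_nablaS (hf : ContDiff ℝ ∞ f) {ψ : ℝ → EuclideanSpace ℝ (Fin n)}
    (hψ : ContDiffOn ℝ ∞ ψ {x | deriv f x ≠ 0}) : IsSmoothNormalField f (nablaS f ψ) where
  contDiffOn := by
    have hτ := contDiffOn_tau hf
    have hdψ := contDiffOn_sDeriv hf hψ
    exact hdψ.sub ((hdψ.inner ℝ hτ).smul hτ)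
  inner_tau _ hx := inner_nablaS_tau hx

theorem isSmoothNormalField_nablaSIter_kappa (hf : ContDiff ℝ ∞ f) (i : ℕ) :
    IsSmoothNormalField f (nablaSIter f i (kappa f)) := by
  induction i with
  | zero => exact ⟨contDiffOn_sDeriv hf (contDiffOn_tau hf), fun _ hx => inner_kappa_tau_s12 hf hx⟩
  | succ i ih => exact isSmoothNormalField_nablaS hf ih.contDiffOn

theorem inner_deriv_eq_mul_inner_nablaS {φ ψ : ℝ → EuclideanSpace ℝ (Fin n)} {x : ℝ}
    (hx : deriv f x ≠ 0) (hφ : ⟪φ x, tau f x⟫ = 0) :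
    ⟪φ x, deriv ψ x⟫ = ‖deriv f x‖ * ⟪φ x, nablaS f ψ x⟫ := by
  rw [nablaS, inner_sub_right, real_inner_smul_right, hφ, mul_zero, sub_zero, sDeriv,
    real_inner_smul_right, mul_inv_cancel_left₀ (norm_ne_zero_iff.2 hx)]

theorem IsSmoothNormalField.hasDerivAt_inner (hf : ContDiff ℝ ∞ f)
    {φ ψ : ℝ → EuclideanSpace ℝ (Fin n)} (hφ : IsSmoothNormalField f φ)
    (hψ : IsSmoothNormalField f ψ) {x : ℝ} (hx : deriv f x ≠ 0) :
    HasDerivAt (fun y => ⟪φ y, ψ y⟫)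
      (‖deriv f x‖ * (⟪φ x, nablaS f ψ x⟫ + ⟪nablaS f φ x, ψ x⟫)) x := by
  have hU := (isOpen_setOf_deriv_ne_zero (hf.continuous_deriv (by simp))).mem_nhds hx
  have hφd := (hφ.contDiffOn.contDiffAt hU).differentiableAt (by simp)
  have hψd := (hψ.contDiffOn.contDiffAt hU).differentiableAt (by simp)
  refine (hφd.hasDerivAt.inner ℝ hψd.hasDerivAt).congr_deriv ?_
  rw [inner_deriv_eq_mul_inner_nablaS hx (hφ.inner_tau x hx), real_inner_comm (ψ x) (deriv φ x),
    inner_deriv_eq_mul_inner_nablaS hx (hψ.inner_tau x hx), real_inner_comm (ψ x)]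
  ring

end Curve

section L2

variable {n : ℕ} {f : ℝ → EuclideanSpace ℝ (Fin n)}

def l2Norm (f ψ : ℝ → EuclideanSpace ℝ (Fin n)) : ℝ :=
  √(∫ x in (0 : ℝ)..1, ‖ψ x‖ ^ 2 * ‖deriv f x‖)

theorem sq_l2Norm (ψ : ℝ → EuclideanSpace ℝ (Fin n)) :
    l2Norm f ψ ^ 2 = ∫ x in (0 : ℝ)..1, ‖ψ x‖ ^ 2 * ‖deriv f x‖ :=
  Real.sq_sqrt (intervalIntegral.integral_nonneg zero_le_one fun _ _ => by positivity)

theorem l2Norm_nonneg (ψ : ℝ → EuclideanSpace ℝ (Fin n)) : 0 ≤ l2Norm f ψ :=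
  Real.sqrt_nonneg _

theorem curveLen_nonneg : 0 ≤ curveLen f :=
  intervalIntegral.integral_nonneg zero_le_one fun _ _ => norm_nonneg _

theorem continuousOn_norm_deriv (hf : ContDiff ℝ ∞ f) :
    ContinuousOn (fun x => ‖deriv f x‖) (Icc 0 1) :=
  (hf.continuous_deriv (by simp)).norm.continuousOn

namespace IsSmoothNormalField

variable {ψ : ℝ → EuclideanSpace ℝ (Fin n)}

theorem continuousOn_Icc (hreg : ∀ x ∈ Icc (0 : ℝ) 1, deriv f x ≠ 0)
    (hψ : IsSmoothNormalField f ψ) : ContinuousOn ψ (Icc 0 1) :=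
  hψ.contDiffOn.continuousOn.mono hreg

theorem curveLen_mul_sq_norm_le (hf : ContDiff ℝ ∞ f)
    (hreg : ∀ x ∈ Icc (0 : ℝ) 1, deriv f x ≠ 0) (hψ : IsSmoothNormalField f ψ) {e : ℝ}
    (he : e ∈ Icc (0 : ℝ) 1) :
    curveLen f * ‖ψ e‖ ^ 2 ≤
      l2Norm f ψ ^ 2 + 2 * curveLen f * (l2Norm f ψ * l2Norm f (nablaS f ψ)) := by
  have hψ₁ := isSmoothNormalField_nablaS hf hψ.contDiffOn
  have hρ := continuousOn_norm_deriv hf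
  have hρ0 : ∀ x ∈ Icc (0 : ℝ) 1, 0 ≤ ‖deriv f x‖ := fun _ _ => norm_nonneg _
  have hmean := integral_mul_sub_integral_abs_deriv_le zero_le_one he
    (fun x hx => hψ.hasDerivAt_inner hf hψ (hreg x hx))
    (hρ.mul (((hψ.continuousOn_Icc hreg).inner (hψ₁.continuousOn_Icc hreg)).add
      ((hψ₁.continuousOn_Icc hreg).inner (hψ.continuousOn_Icc hreg)))) hρ hρ0
  have hvar : ∫ x in (0 : ℝ)..1,
      |‖deriv f x‖ * (⟪ψ x, nablaS f ψ x⟫ + ⟪nablaS f ψ x, ψ x⟫)| ≤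
        2 * (l2Norm f ψ * l2Norm f (nablaS f ψ)) := by
    have hsym : ∀ x, |‖deriv f x‖ * (⟪ψ x, nablaS f ψ x⟫ + ⟪nablaS f ψ x, ψ x⟫)| =
        2 * (|⟪ψ x, nablaS f ψ x⟫| * ‖deriv f x‖) := fun x => by
      rw [real_inner_comm (ψ x), ← two_mul, abs_mul, abs_mul, abs_norm, abs_two]
      ring
    simp_rw [hsym, intervalIntegral.integral_const_mul]
    exact mul_le_mul_of_nonneg_left (integral_abs_inner_mul_le_sqrt_mul_sqrt zero_le_one
      (hψ.continuousOn_Icc hreg) (hψ₁.continuousOn_Icc hreg) hρ hρ0) zero_le_two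
  change curveLen f * _ ≤ _ at hmean
  simp only [real_inner_self_eq_norm_sq, ← sq_l2Norm] at hmean
  nlinarith [mul_le_mul_of_nonneg_left hvar (curveLen_nonneg (f := f))]

theorem sq_l2Norm_nablaS_le (hf : ContDiff ℝ ∞ f) (hreg : ∀ x ∈ Icc (0 : ℝ) 1, deriv f x ≠ 0)
    (hψ : IsSmoothNormalField f ψ) :
    l2Norm f (nablaS f ψ) ^ 2 ≤ ‖ψ 1‖ * ‖nablaS f ψ 1‖ + ‖ψ 0‖ * ‖nablaS f ψ 0‖ +
      l2Norm f ψ * l2Norm f (nablaS f (nablaS f ψ)) := by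
  set ψ₁ := nablaS f ψ
  set ψ₂ := nablaS f ψ₁
  have hψ₁ := isSmoothNormalField_nablaS hf hψ.contDiffOn
  have hψ₂ := isSmoothNormalField_nablaS hf hψ₁.contDiffOn
  have hρ := continuousOn_norm_deriv hf
  have hint : IntervalIntegrable (fun x => ⟪ψ x, ψ₂ x⟫ * ‖deriv f x‖) volume 0 1 :=
    (((hψ.continuousOn_Icc hreg).inner (hψ₂.continuousOn_Icc hreg)).mul
      hρ).intervalIntegrable_of_Icc zero_le_one
  have hint₁ : IntervalIntegrable (fun x => ‖ψ₁ x‖ ^ 2 * ‖deriv f x‖) volume 0 1 :=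
    (((hψ₁.continuousOn_Icc hreg).norm.pow 2).mul hρ).intervalIntegrable_of_Icc zero_le_one
  have hparts : (∫ x in (0 : ℝ)..1, ⟪ψ x, ψ₂ x⟫ * ‖deriv f x‖) + l2Norm f ψ₁ ^ 2 =
      ⟪ψ 1, ψ₁ 1⟫ - ⟪ψ 0, ψ₁ 0⟫ := by
    rw [sq_l2Norm, ← intervalIntegral.integral_add hint hint₁]
    refine intervalIntegral.integral_eq_sub_of_hasDerivAt (f := fun x => ⟪ψ x, ψ₁ x⟫)
      (fun x hx => ?_) (hint.add hint₁)
    rw [uIcc_of_le zero_le_one] at hx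
    refine (hψ.hasDerivAt_inner hf hψ₁ (hreg x hx)).congr_deriv ?_
    rw [real_inner_self_eq_norm_sq]
    ring
  have hbulk : -∫ x in (0 : ℝ)..1, ⟪ψ x, ψ₂ x⟫ * ‖deriv f x‖ ≤ l2Norm f ψ * l2Norm f ψ₂ := by
    refine (neg_le_abs _).trans
      ((intervalIntegral.abs_integral_le_integral_abs zero_le_one).trans ?_)
    simp_rw [abs_mul, abs_norm]
    exact integral_abs_inner_mul_le_sqrt_mul_sqrt zero_le_one (hψ.continuousOn_Icc hreg)
      (hψ₂.continuousOn_Icc hreg) hρ fun _ _ => norm_nonneg _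
  have hend₁ := real_inner_le_norm (ψ 1) (ψ₁ 1)
  have hend₀ := neg_le_of_abs_le (abs_real_inner_le_norm (ψ 0) (ψ₁ 0))
  linarith

theorem sq_curveLen_mul_l2Norm_nablaS_le (hf : ContDiff ℝ ∞ f)
    (hreg : ∀ x ∈ Icc (0 : ℝ) 1, deriv f x ≠ 0) (hψ : IsSmoothNormalField f ψ) :
    (curveLen f * l2Norm f (nablaS f ψ)) ^ 2 ≤ 10000 * (l2Norm f ψ ^ 2 +
      l2Norm f ψ * (curveLen f ^ 2 * l2Norm f (nablaS f (nablaS f ψ)))) := by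
  set L := curveLen f
  set ψ₁ := nablaS f ψ
  have hψ₁ := isSmoothNormalField_nablaS hf hψ.contDiffOn
  have hL : 0 ≤ L := curveLen_nonneg
  set x := l2Norm f ψ
  set y := L * l2Norm f ψ₁
  set z := L ^ 2 * l2Norm f (nablaS f ψ₁)
  have hendpoint : ∀ e ∈ Icc (0 : ℝ) 1,
      (L ^ 2 * (‖ψ e‖ * ‖ψ₁ e‖)) ^ 2 ≤ (x ^ 2 + 2 * x * y) * (y ^ 2 + 2 * y * z) := by
    intro e he
    have h₀ : L * ‖ψ e‖ ^ 2 ≤ x ^ 2 + 2 * x * y := by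
      linarith [hψ.curveLen_mul_sq_norm_le hf hreg he]
    have h₁ : L ^ 2 * (L * ‖ψ₁ e‖ ^ 2) ≤ y ^ 2 + 2 * y * z := by
      linarith [mul_le_mul_of_nonneg_left (hψ₁.curveLen_mul_sq_norm_le hf hreg he) (sq_nonneg L)]
    calc (L ^ 2 * (‖ψ e‖ * ‖ψ₁ e‖)) ^ 2
        = (L * ‖ψ e‖ ^ 2) * (L ^ 2 * (L * ‖ψ₁ e‖ ^ 2)) := by ring
      _ ≤ _ := mul_le_mul h₀ h₁ (by positivity) (by nlinarith)
  have hparts : y ^ 2 ≤ L ^ 2 * (‖ψ 1‖ * ‖ψ₁ 1‖) + L ^ 2 * (‖ψ 0‖ * ‖ψ₁ 0‖) + x * z := by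
    linarith [mul_le_mul_of_nonneg_left (hψ.sq_l2Norm_nablaS_le hf hreg) (sq_nonneg L)]
  exact sq_le_of_sq_le_add_add (l2Norm_nonneg ψ) (mul_nonneg hL (l2Norm_nonneg ψ₁))
    (mul_nonneg (sq_nonneg L) (l2Norm_nonneg _)) (hendpoint 1 (by simp)) (hendpoint 0 (by simp))
    hparts

end IsSmoothNormalField

end L2

section ScaledNorm

variable {n : ℕ} {f : ℝ → EuclideanSpace ℝ (Fin n)}

def scaledL2Norm (f : ℝ → EuclideanSpace ℝ (Fin n)) (i : ℕ) : ℝ :=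
  curveLen f ^ i * l2Norm f (nablaSIter f i (kappa f))

theorem scaledL2Norm_nonneg (i : ℕ) : 0 ≤ scaledL2Norm f i :=
  mul_nonneg (pow_nonneg curveLen_nonneg i) (l2Norm_nonneg _)

theorem knorm_two_eq (i : ℕ) : knorm f i 2 = √(curveLen f) * scaledL2Norm f i := by
  simp_rw [knorm, scaledL2Norm, l2Norm, Real.rpow_two]
  rw [show (i : ℝ) + 1 - 1 / 2 = 1 / 2 + i by ring,
    Real.rpow_add' curveLen_nonneg (by positivity), Real.rpow_natCast, ← Real.sqrt_eq_rpow,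
    ← Real.sqrt_eq_rpow]
  ring

theorem sq_scaledL2Norm_succ_le (hf : ContDiff ℝ ∞ f)
    (hreg : ∀ x ∈ Icc (0 : ℝ) 1, deriv f x ≠ 0) (i : ℕ) :
    scaledL2Norm f (i + 1) ^ 2 ≤
      10000 * (scaledL2Norm f i ^ 2 + scaledL2Norm f i * scaledL2Norm f (i + 2)) := by
  have h := mul_le_mul_of_nonneg_left
    ((isSmoothNormalField_nablaSIter_kappa hf i).sq_curveLen_mul_l2Norm_nablaS_le hf hreg)
    (pow_nonneg (sq_nonneg (curveLen f)) i)
  simp only [scaledL2Norm, nablaSIter]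
  linear_combination h

end ScaledNorm

theorem knormSum_le_general (n k : ℕ) :
    ∃ C : ℝ, 0 < C ∧
      ∀ f : ℝ → EuclideanSpace ℝ (Fin n),
        ContDiff ℝ (⊤ : ℕ∞) f → (∀ x ∈ Icc (0 : ℝ) 1, deriv f x ≠ 0) →
        knormSum f k 2 ≤ C * (knorm f k 2 + knorm f 0 2) := by
  set C₀ : ℝ := (2 * (2 * 10000) ^ k) ^ k
  refine ⟨(k + 1) * C₀, by positivity, fun f hf hreg => ?_⟩
  have hbound := le_pow_mul_add_of_sq_le (k := k) (by norm_num) scaledL2Norm_nonneg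
    fun i _ => sq_scaledL2Norm_succ_le (f := f) hf hreg i
  simp only [knormSum, knorm_two_eq]
  calc ∑ i ∈ Finset.range (k + 1), √(curveLen f) * scaledL2Norm f i
      ≤ ∑ i ∈ Finset.range (k + 1),
          √(curveLen f) * (C₀ * (scaledL2Norm f 0 + scaledL2Norm f k)) :=
        Finset.sum_le_sum fun i hi => mul_le_mul_of_nonneg_left
          (hbound i (Nat.lt_succ_iff.1 (Finset.mem_range.1 hi))) (Real.sqrt_nonneg _)
    _ = (k + 1) * C₀ *
          (√(curveLen f) * scaledL2Norm f k + √(curveLen f) * scaledL2Norm f 0) := by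
        rw [Finset.sum_const, Finset.card_range, nsmul_eq_mul]
        push_cast
        ring

/-- `‖κ‖_{k,2} ≤ C (‖∇ₛᵏκ‖₂ + ‖κ‖₂)` with `C = C(n,k)`. -/
theorem knormSum_le (n k : ℕ) (hn : 2 ≤ n) :
    ∃ C : ℝ, 0 < C ∧
      ∀ f : ℝ → EuclideanSpace ℝ (Fin n),
        ContDiff ℝ (⊤ : ℕ∞) f → (∀ x ∈ Icc (0 : ℝ) 1, deriv f x ≠ 0) →
        knormSum f k 2 ≤ C * (knorm f k 2 + knorm f 0 2) :=
  knormSum_le_general n k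
end
end
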